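/- Donsker–Varadhan lower bound: for finite types A, B, a joint probability mass function p on A × B with marginals pA, pB, and any function f : A × B → ℝ, the mutual information I(A;B) = ∑ D(p‖pA⊗pB) satisfies I(A;B) ≥ E_{p}[f] − log E_{pA⊗pB}[exp f]. -/

import Mathlib

/-!
Apply the Fenchel–Young inequality `p t ≤ p log (p / q) + q eᵗ - p` of `x log x` (a form of
`log x ≤ x - 1`) at `t = f - log Z`, where `Z = ∑ q e^f`, and sum: the terms `q e^f / Z` add up
to `1 = ∑ p`, so the correction terms cancel.
-/

open Finset Real

theorem Real.mul_le_mul_log_div_add_mul_exp_sub {p q : ℝ} (hp : 0 ≤ p) (hq : 0 ≤ q)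
    (hpq : 0 < p → 0 < q) (t : ℝ) : p * t ≤ p * log (p / q) + q * exp t - p := by
  rcases hp.eq_or_lt with rfl | hp
  · simpa using mul_nonneg hq (exp_pos t).le
  have hq := hpq hp
  have hlog : t - log (p / q) = log (q * exp t / p) := by
    rw [log_div (by positivity) hp.ne', log_mul hq.ne' (exp_pos t).ne', log_exp,
      log_div hp.ne' hq.ne']
    ring
  calc p * t = p * log (p / q) + p * log (q * exp t / p) := by rw [← hlog]; ring
    _ ≤ p * log (p / q) + p * (q * exp t / p - 1) := by
        gcongr; exact log_le_sub_one_of_pos (by positivity)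
    _ = p * log (p / q) + q * exp t - p := by field_simp; ring

theorem Real.sum_mul_sub_log_sum_mul_exp_le {ι : Type*} [Fintype ι] (p q f : ι → ℝ)
    (hp0 : ∀ i, 0 ≤ p i) (hp1 : ∑ i, p i = 1) (hq0 : ∀ i, 0 ≤ q i)
    (hpq : ∀ i, 0 < p i → 0 < q i) :
    ∑ i, p i * f i - log (∑ i, q i * exp (f i)) ≤ ∑ i, p i * log (p i / q i) := by
  set Z := ∑ i, q i * exp (f i)
  obtain ⟨i₀, -, hi₀⟩ := (sum_pos_iff_of_nonneg fun i _ => hp0 i).1 (hp1 ▸ one_pos)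
  have hZ : 0 < Z := sum_pos' (fun i _ => mul_nonneg (hq0 i) (exp_pos _).le)
    ⟨i₀, mem_univ _, mul_pos (hpq i₀ hi₀) (exp_pos _)⟩
  have hexp : ∀ i, exp (f i - log Z) = exp (f i) / Z := fun i => by rw [exp_sub, exp_log hZ]
  calc ∑ i, p i * f i - log Z = ∑ i, p i * (f i - log Z) := by
        simp only [mul_sub, sum_sub_distrib, ← sum_mul, hp1, one_mul]
    _ ≤ ∑ i, (p i * log (p i / q i) + q i * exp (f i - log Z) - p i) :=
        sum_le_sum fun i _ => mul_le_mul_log_div_add_mul_exp_sub (hp0 i) (hq0 i) (hpq i) _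
    _ = ∑ i, p i * log (p i / q i) := by
        simp only [hexp, sum_sub_distrib, sum_add_distrib, mul_div_assoc', ← sum_div, hp1]
        rw [div_self hZ.ne', add_sub_cancel_right]

/-- Donsker–Varadhan lower bound for mutual information on finite types. -/
theorem donsker_varadhan_lower_bound {A B : Type*} [Fintype A] [Fintype B]
    (p : A × B → ℝ)
    (hp0 : ∀ ab, 0 ≤ p ab) (hp1 : ∑ ab, p ab = 1)
    (hpos : ∀ a b, 0 < p (a, b) → 0 < (∑ b', p (a, b')) * (∑ a', p (a', b)))
    (f : A × B → ℝ) :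
    (∑ a, ∑ b, p (a, b) * f (a, b)) -
        Real.log (∑ a, ∑ b, ((∑ b', p (a, b')) * (∑ a', p (a', b))) * Real.exp (f (a, b)))
      ≤ ∑ a, ∑ b, p (a, b) *
          Real.log (p (a, b) / ((∑ b', p (a, b')) * (∑ a', p (a', b)))) := by
  have hprod_nonneg : ∀ ab : A × B, 0 ≤ (∑ b', p (ab.1, b')) * ∑ a', p (a', ab.2) :=
    fun _ => mul_nonneg (sum_nonneg fun _ _ => hp0 _) (sum_nonneg fun _ _ => hp0 _)
  simpa only [Fintype.sum_prod_type] using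
    sum_mul_sub_log_sum_mul_exp_le p (fun ab => (∑ b', p (ab.1, b')) * ∑ a', p (a', ab.2)) f
      hp0 hp1 hprod_nonneg fun ab => hpos ab.1 ab.2
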